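/- arXiv:2401.12828 — 5 statements merged into one kernel-verified Lean document; each statement's English description precedes it below -/
import Mathlib

section
/- Let C > 0. For every ε > 0 there exists R₀ > 0 such that for every family (a_k)_{k∈πℤ³} of complex numbers with ∑_{k∈πℤ³} |a_k|² ≤ C and every R ≥ R₀: ∫_{S²} ∑_{k∈πℤ³, |k|>R} |a_k|² · sinc²(⟨k,n⟩) dσ(n) < ε, where sinc(s) = sin(s)/s for s ≠ 0 and sinc(0) = 1, and ⟨k,n⟩ is the Euclidean inner product of k ∈ ℝ³ and n ∈ S². -/
open MeasureTheory Real Filter Topology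

noncomputable section

abbrev E3 := EuclideanSpace ℝ (Fin 3)

/-- The surface measure on the unit sphere `S² ⊂ ℝ³` (total mass `4π`). -/
def sphereμ : Measure E3 := (μH[2]).restrict (Metric.sphere (0 : E3) 1)

/-- The lattice vector `π k ∈ π ℤ³ ⊂ ℝ³` associated to `k : Fin 3 → ℤ`. -/
def latticeVec (k : Fin 3 → ℤ) : E3 :=
  (EuclideanSpace.equiv (Fin 3) ℝ).symm (fun i => π * (k i : ℝ))

/-- `sinc s = sin s / s` for `s ≠ 0`, and `sinc 0 = 1`. -/
def sinc (s : ℝ) : ℝ := if s = 0 then 1 else Real.sin s / s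

/-!
By Tonelli the integral equals `∑_{|k| > R} |a_k|² ∫ sinc²⟨k, n⟩ dσ(n)`, so it suffices to show
`∫_{S²} sinc²⟨v, n⟩ dσ(n) = O(|v|^(-1/2))`. On the band `|⟨v, n⟩| ≤ √|v|` we use `sinc² ≤ 1`,
off it `sinc² ≤ 1/|v|`. A reflection taking `v/|v|` to `e₀` turns the band into
`{|n₀| ≤ |v|^(-1/2)}`, which is the image of a box of area `4π |v|^(-1/2)` under the cylinder
coordinates `(t, θ) ↦ (t, √(1 - t²) cos θ, √(1 - t²) sin θ)`; these are Lipschitz for `|t| ≤ 3/5`,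
so the band has Hausdorff measure `O(|v|^(-1/2))`. Since `3 (3/5)² > 1`, the three bands of
half-width `3/5` around the coordinate planes cover the sphere, so `σ` is finite.
-/

open Set
open scoped ENNReal NNReal RealInnerProductSpace

def cylinderMap (p : Fin 2 → ℝ) : E3 :=
  !₂[p 0, √(1 - p 0 ^ 2) * cos (p 1), √(1 - p 0 ^ 2) * sin (p 1)]

def cylinderBox (t : ℝ) : Set (Fin 2 → ℝ) := Icc ![-t, -π] ![t, π]

lemma contDiffOn_cylinderMap : ContDiffOn ℝ 1 cylinderMap (cylinderBox (3 / 5)) := by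
  have hsqrt : ContDiffOn ℝ 1 (fun p : Fin 2 → ℝ => √(1 - p 0 ^ 2)) (cylinderBox (3 / 5)) := by
    refine ContDiffOn.sqrt (by fun_prop) fun p hp => ?_
    have h0 : |p 0| ≤ 3 / 5 := abs_le.2 ⟨by simpa using hp.1 0, by simpa using hp.2 0⟩
    nlinarith [sq_abs (p 0), abs_nonneg (p 0)]
  refine (PiLp.continuousLinearEquiv 2 ℝ (fun _ : Fin 3 => ℝ)).symm.contDiff.comp_contDiffOn ?_
  refine contDiffOn_pi.2 fun i => ?_
  fin_cases i
  · exact (contDiff_apply ℝ ℝ 0).contDiffOn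
  · exact hsqrt.mul (by fun_prop)
  · exact hsqrt.mul (by fun_prop)

lemma exists_lipschitzOnWith_cylinderMap :
    ∃ K, LipschitzOnWith K cylinderMap (cylinderBox (3 / 5)) :=
  contDiffOn_cylinderMap.exists_lipschitzOnWith one_ne_zero (convex_Icc _ _) isCompact_Icc

lemma hausdorffMeasure_cylinderBox (t : ℝ) :
    μH[2] (cylinderBox t) = ENNReal.ofReal (2 * t) * ENNReal.ofReal (2 * π) := by
  have h : (μH[2] : Measure (Fin 2 → ℝ)) = volume := by
    simpa using hausdorffMeasure_pi_real (ι := Fin 2)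
  rw [h, cylinderBox, Real.volume_Icc_pi, Fin.prod_univ_two]
  congr 2 <;> simp <;> ring

lemma sum_sq_eq_one_of_mem_sphere {n : E3} (hn : n ∈ Metric.sphere (0 : E3) 1) :
    n 0 ^ 2 + n 1 ^ 2 + n 2 ^ 2 = 1 := by
  have h := EuclideanSpace.real_norm_sq_eq n
  rwa [mem_sphere_zero_iff_norm.1 hn, one_pow, Fin.sum_univ_three, eq_comm] at h

lemma sphere_inter_subset_image_cylinderBox (t : ℝ) :
    Metric.sphere (0 : E3) 1 ∩ {n | |n 0| ≤ t} ⊆ cylinderMap '' cylinderBox t := by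
  rintro n ⟨hn, hnt⟩
  set z : ℂ := ⟨n 1, n 2⟩
  have hz : ‖z‖ = √(1 - n 0 ^ 2) := by
    rw [Complex.norm_eq_sqrt_sq_add_sq]
    congr 1
    linarith [sum_sq_eq_one_of_mem_sphere hn]
  refine ⟨![n 0, z.arg], ⟨?_, ?_⟩, ?_⟩
  · intro i; fin_cases i
    · simpa using (abs_le.1 hnt).1
    · simpa using (Complex.neg_pi_lt_arg z).le
  · intro i; fin_cases i
    · simpa using (abs_le.1 hnt).2
    · simpa using Complex.arg_le_pi z
  · ext i; fin_cases i
    · simp [cylinderMap]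
    · simpa [cylinderMap, hz] using Complex.norm_mul_cos_arg z
    · simpa [cylinderMap, hz] using Complex.norm_mul_sin_arg z

lemma sphereμ_apply (s : Set E3) : sphereμ s = μH[2] (s ∩ Metric.sphere 0 1) :=
  Measure.restrict_apply' Metric.isClosed_sphere.measurableSet

lemma exists_sphereμ_abs_coord_le :
    ∃ K : ℝ, 0 ≤ K ∧ ∀ t ≤ 3 / 5, sphereμ {n | |n 0| ≤ t} ≤ ENNReal.ofReal (K * t) := by
  obtain ⟨L, hL⟩ := exists_lipschitzOnWith_cylinderMap
  refine ⟨L ^ 2 * (4 * π), by positivity, fun t ht => ?_⟩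
  have hbox : cylinderBox t ⊆ cylinderBox (3 / 5) := by
    refine Icc_subset_Icc (fun i => ?_) (fun i => ?_) <;> fin_cases i <;> simp [ht]
  calc sphereμ {n | |n 0| ≤ t}
      ≤ μH[2] (cylinderMap '' cylinderBox t) := by
        rw [sphereμ_apply, inter_comm]
        exact measure_mono (sphere_inter_subset_image_cylinderBox t)
    _ ≤ (L : ℝ≥0∞) ^ (2 : ℝ) * μH[2] (cylinderBox t) :=
        (hL.mono hbox).hausdorffMeasure_image_le (by norm_num)
    _ = ENNReal.ofReal (L ^ 2 * (4 * π) * t) := by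
        rw [show (L : ℝ) ^ 2 * (4 * π) * t = L ^ 2 * (2 * t * (2 * π)) by ring,
          ENNReal.ofReal_mul (by positivity), ENNReal.ofReal_mul' (by positivity),
          ENNReal.ofReal_pow L.coe_nonneg, ENNReal.ofReal_coe_nnreal, hausdorffMeasure_cylinderBox,
          ENNReal.rpow_two]

lemma sphereμ_preimage_linearIsometryEquiv (e : E3 ≃ₗᵢ[ℝ] E3) (s : Set E3) :
    sphereμ (e ⁻¹' s) = sphereμ s := by
  have hsphere : e ⁻¹' Metric.sphere 0 1 = Metric.sphere 0 1 := by
    ext n; simp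
  rw [sphereμ_apply, sphereμ_apply]
  conv_lhs => rw [← hsphere, ← preimage_inter]
  exact e.toIsometryEquiv.hausdorffMeasure_preimage _ _

lemma sphereμ_abs_inner_le_eq {u : E3} (hu : ‖u‖ = 1) (t : ℝ) :
    sphereμ {n | |⟪u, n⟫| ≤ t} = sphereμ {n | |n 0| ≤ t} := by
  set e₀ : E3 := EuclideanSpace.single 0 1
  have he₀ : ‖e₀‖ = ‖u‖ := by simp [e₀, hu]
  set r := (ℝ ∙ (e₀ - u))ᗮ.reflection
  have hr : r e₀ = u := Submodule.reflection_sub he₀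
  have hband : r ⁻¹' {n | |⟪u, n⟫| ≤ t} = {n | |n 0| ≤ t} := by
    ext m
    simp [← hr, e₀, LinearIsometryEquiv.inner_map_map, EuclideanSpace.inner_single_left]
  rw [← hband, sphereμ_preimage_linearIsometryEquiv]

lemma exists_sphereμ_abs_inner_le :
    ∃ K : ℝ, 0 ≤ K ∧ ∀ u : E3, ‖u‖ = 1 → ∀ t ≤ 3 / 5,
      sphereμ {n | |⟪u, n⟫| ≤ t} ≤ ENNReal.ofReal (K * t) := by
  obtain ⟨K, hK, hband⟩ := exists_sphereμ_abs_coord_le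
  exact ⟨K, hK, fun u hu t ht => (sphereμ_abs_inner_le_eq hu t).trans_le (hband t ht)⟩

instance isFiniteMeasure_sphereμ : IsFiniteMeasure sphereμ := by
  obtain ⟨K, -, hband⟩ := exists_sphereμ_abs_inner_le
  have hcover : Metric.sphere (0 : E3) 1 ⊆ ⋃ i, {n | |⟪EuclideanSpace.single i 1, n⟫| ≤ 3 / 5} := by
    intro n hn
    have h := sum_sq_eq_one_of_mem_sphere hn
    simp only [mem_iUnion, mem_ofPred_eq, EuclideanSpace.inner_single_left, map_one, one_mul]
    by_contra! hbig
    have := hbig 0; have := hbig 1; have := hbig 2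
    nlinarith [sq_abs (n 0), sq_abs (n 1), sq_abs (n 2)]
  constructor
  calc sphereμ univ = sphereμ (⋃ i, {n | |⟪EuclideanSpace.single i 1, n⟫| ≤ 3 / 5}) := by
        rw [sphereμ_apply, sphereμ_apply, univ_inter, inter_eq_right.2 hcover]
    _ ≤ ∑ i, sphereμ {n | |⟪EuclideanSpace.single i 1, n⟫| ≤ 3 / 5} := measure_iUnion_fintype_le _ _
    _ < ⊤ := ENNReal.sum_lt_top.2 fun i _ =>
        (hband _ (by simp) _ le_rfl).trans_lt ENNReal.ofReal_lt_top

lemma sinc_sq_le_inv_sq {x : ℝ} (hx : x ≠ 0) : Real.sinc x ^ 2 ≤ (x ^ 2)⁻¹ := by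
  rw [Real.sinc_of_ne_zero hx, div_pow, div_eq_mul_inv]
  exact mul_le_of_le_one_left (by positivity) (sin_sq_le_one x)

lemma sinc_sq_le_indicator_add {s : ℝ} (hs : 0 < s) (x : ℝ) :
    Real.sinc x ^ 2 ≤ {x | |x| ≤ s}.indicator 1 x + (s ^ 2)⁻¹ := by
  by_cases hx : |x| ≤ s
  · rw [indicator_of_mem (show x ∈ {x | |x| ≤ s} from hx), Pi.one_apply]
    have : Real.sinc x ^ 2 ≤ 1 := by simpa [abs_le] using Real.abs_sinc_le_one x
    linarith [inv_nonneg.2 (sq_nonneg s)]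
  · rw [indicator_of_notMem (show x ∉ {x | |x| ≤ s} from hx), zero_add]
    have hsx : s ^ 2 ≤ x ^ 2 := by nlinarith [sq_abs x, not_le.1 hx]
    exact (sinc_sq_le_inv_sq (by rintro rfl; simp at hx; linarith)).trans
      (inv_anti₀ (by positivity) hsx)

lemma integrable_sinc_sq_inner (v : E3) :
    Integrable (fun n => Real.sinc ⟪v, n⟫ ^ 2) sphereμ :=
  .of_bound (by fun_prop) 1 (ae_of_all _ fun n => by
    simpa [abs_le] using Real.abs_sinc_le_one ⟪v, n⟫)

lemma exists_integral_sinc_sq_inner_le :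
    ∃ K, 0 ≤ K ∧ ∀ v : E3, 3 ≤ ‖v‖ → ∫ n, Real.sinc ⟪v, n⟫ ^ 2 ∂sphereμ ≤ K / √‖v‖ := by
  obtain ⟨K, hK, hband⟩ := exists_sphereμ_abs_inner_le
  refine ⟨K + sphereμ.real univ, by positivity, fun v hv => ?_⟩
  set r := ‖v‖
  have hr : 0 < r := by linarith
  have hsr : 0 < √r := Real.sqrt_pos.2 hr
  have hsr_le : √r ≤ r := Real.sqrt_le_self_iff.2 (Or.inr (by linarith))
  set B := {n : E3 | |⟪v, n⟫| ≤ √r}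
  have hB : MeasurableSet B := measurableSet_le (by fun_prop) (by fun_prop)
  have hBμ : sphereμ.real B ≤ K / √r := by
    have hu : ‖r⁻¹ • v‖ = 1 := by rw [norm_smul, norm_inv, norm_norm, inv_mul_cancel₀ hr.ne']
    have hBu : B = {n | |⟪r⁻¹ • v, n⟫| ≤ (√r)⁻¹} := by
      ext n
      simp only [B, mem_ofPred_eq, real_inner_smul_left, abs_mul, abs_inv, abs_of_pos hr]
      rw [inv_mul_le_iff₀ hr, ← div_eq_mul_inv, Real.div_sqrt]
    have ht : (√r)⁻¹ ≤ 3 / 5 := by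
      rw [inv_le_comm₀ hsr (by norm_num), Real.le_sqrt' (by norm_num)]
      linarith
    rw [hBu, measureReal_def, div_eq_mul_inv]
    exact ENNReal.toReal_le_of_le_ofReal (by positivity) (hband _ hu _ ht)
  calc ∫ n, Real.sinc ⟪v, n⟫ ^ 2 ∂sphereμ
      ≤ ∫ n, (B.indicator 1 n + (√r ^ 2)⁻¹) ∂sphereμ :=
        integral_mono (integrable_sinc_sq_inner v)
          (((integrable_const 1).indicator hB).add (integrable_const _))
          fun n => sinc_sq_le_indicator_add hsr ⟪v, n⟫
    _ = sphereμ.real B + sphereμ.real univ * r⁻¹ := by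
        rw [integral_add ((integrable_const 1).indicator hB) (integrable_const _),
          integral_indicator_one hB, integral_const, Real.sq_sqrt hr.le, smul_eq_mul]
    _ ≤ K / √r + sphereμ.real univ / √r := by
        gcongr
        rw [← div_eq_mul_inv]
        exact div_le_div_of_nonneg_left measureReal_nonneg hsr hsr_le
    _ = (K + sphereμ.real univ) / √r := (add_div _ _ _).symm

lemma sinc_eq_real_sinc : _root_.sinc = Real.sinc := rfl

theorem stmt8_general (C : ℝ) :
    ∀ ε : ℝ, 0 < ε → ∃ R₀ : ℝ, 0 < R₀ ∧
      ∀ a : (Fin 3 → ℤ) → ℂ, Summable (fun k => ‖a k‖ ^ 2) →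
        (∑' k : Fin 3 → ℤ, ‖a k‖ ^ 2) ≤ C →
      ∀ R : ℝ, R₀ ≤ R →
        (∫ n, (∑' k : Fin 3 → ℤ,
            if R < ‖latticeVec k‖ then
              ‖a k‖ ^ 2 * _root_.sinc ((inner ℝ (latticeVec k) n : ℝ)) ^ 2
            else 0) ∂sphereμ) < ε := by
  intro ε hε
  obtain ⟨K, hK, hsinc⟩ := exists_integral_sinc_sq_inner_le
  refine ⟨3 + (C * K / ε) ^ 2, by positivity, fun a hsum hC R hR => ?_⟩
  simp only [sinc_eq_real_sinc]
  set F : (Fin 3 → ℤ) → E3 → ℝ := fun k n =>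
    if R < ‖latticeVec k‖ then ‖a k‖ ^ 2 * Real.sinc ⟪latticeVec k, n⟫ ^ 2 else 0
  have hsR : 0 < √R := Real.sqrt_pos.2 (by nlinarith)
  have hF_int : ∀ k, Integrable (F k) sphereμ := fun k => by
    by_cases hk : R < ‖latticeVec k‖
    · simpa [F, hk] using (integrable_sinc_sq_inner (latticeVec k)).const_mul (‖a k‖ ^ 2)
    · simp [F, hk]
  have hF_nonneg : ∀ k n, 0 ≤ F k n := fun k n => by positivity
  have hF_le : ∀ k, ∫ n, F k n ∂sphereμ ≤ ‖a k‖ ^ 2 * (K / √R) := fun k => by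
    by_cases hk : R < ‖latticeVec k‖
    · simp only [F, hk, if_true, integral_const_mul]
      refine mul_le_mul_of_nonneg_left ((hsinc _ (by linarith [sq_nonneg (C * K / ε)])).trans ?_)
        (by positivity)
      exact div_le_div_of_nonneg_left hK hsR (Real.sqrt_le_sqrt hk.le)
    · simp only [F, hk, if_false, integral_zero]
      positivity
  have hF_sum : Summable fun k => ∫ n, F k n ∂sphereμ :=
    (hsum.mul_right _).of_nonneg_of_le (fun k => integral_nonneg (hF_nonneg k)) hF_le
  have hCK : C * K < ε * √R := by
    have := Real.lt_sqrt_of_sq_lt (show (C * K / ε) ^ 2 < R by linarith)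
    rw [div_lt_iff₀ hε] at this
    linarith
  calc ∫ n, ∑' k, F k n ∂sphereμ
      = ∑' k, ∫ n, F k n ∂sphereμ :=
        (integral_tsum_of_summable_integral_norm hF_int
          (by simpa [abs_of_nonneg (hF_nonneg _ _)] using hF_sum)).symm
    _ ≤ ∑' k, ‖a k‖ ^ 2 * (K / √R) := hF_sum.tsum_le_tsum hF_le (hsum.mul_right _)
    _ = (∑' k, ‖a k‖ ^ 2) * (K / √R) := tsum_mul_right
    _ ≤ C * (K / √R) := by gcongr
    _ < ε := by rwa [← mul_div_assoc, div_lt_iff₀ hsR]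

theorem stmt8 (C : ℝ) (hC : 0 < C) :
    ∀ ε : ℝ, 0 < ε → ∃ R₀ : ℝ, 0 < R₀ ∧
      ∀ a : (Fin 3 → ℤ) → ℂ, Summable (fun k => ‖a k‖ ^ 2) →
        (∑' k : Fin 3 → ℤ, ‖a k‖ ^ 2) ≤ C →
      ∀ R : ℝ, R₀ ≤ R →
        (∫ n, (∑' k : Fin 3 → ℤ,
            if R < ‖latticeVec k‖ then
              ‖a k‖ ^ 2 * _root_.sinc ((inner ℝ (latticeVec k) n : ℝ)) ^ 2
            else 0) ∂sphereμ) < ε :=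
  stmt8_general C
end
end

section
/- Let Ω ⊂ ℝ³ be a bounded measurable set. Then there exists a constant C > 0, depending only on Ω, such that for all x, h ∈ ℝ³ with |h| ≤ 1: ∫_Ω | |x−η|^{−2} − |x+h−η|^{−2} | dη ≤ C |h|^{1/2}. -/
/-!
Write `u = ‖x - η‖⁻¹` and `v = ‖x + h - η‖⁻¹`. Then `|u - v| ≤ ‖h‖ u v` and `|u - v| ≤ max u v`,
so `|u - v|² ≤ ‖h‖ (max u v)³` and `|u² - v²| = |u - v| (u + v) ≤ 2 √‖h‖ (max u v)^(5/2)`.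
Since `5/2 < 3`, the kernel `‖z‖^(-5/2)` is integrable on the unit ball and at most `1` outside it,
so its integral over `Ω` centred at any point is at most `vol Ω + ∫_{‖z‖<1} ‖z‖^(-5/2)`.
-/

open MeasureTheory Real

noncomputable section

open Metric Module

lemma sq_sq_sub_sq_le_max_pow {u v t : ℝ} (hu : 0 < u) (hv : 0 < v) (huv : |u - v| ≤ t * u * v) :
    (u ^ 2 - v ^ 2) ^ 2 ≤ 4 * t * max u v ^ 5 := by
  set m := max u v
  have hm : |u - v| ≤ m :=
    abs_sub_le_iff.mpr ⟨by linarith [le_max_left u v], by linarith [le_max_right u v]⟩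
  have ht : 0 ≤ t := by nlinarith [abs_nonneg (u - v), mul_pos hu hv]
  have huvm : u * v ≤ m ^ 2 := by nlinarith [le_max_left u v, le_max_right u v]
  have hsum : (u + v) ^ 2 ≤ 4 * m ^ 2 := by nlinarith [le_max_left u v, le_max_right u v]
  calc (u ^ 2 - v ^ 2) ^ 2 = |u - v| * |u - v| * (u + v) ^ 2 := by
        rw [abs_mul_abs_self]; ring
    _ ≤ (t * m ^ 2) * m * (4 * m ^ 2) := by
        gcongr
        exact huv.trans (by rw [mul_assoc]; gcongr)
    _ = 4 * t * m ^ 5 := by ring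

lemma abs_inv_sq_sub_inv_sq_le {a b t : ℝ} (ha : 0 < a) (hb : 0 < b) (hab : |a - b| ≤ t) :
    |(a ^ 2)⁻¹ - (b ^ 2)⁻¹| ≤ 2 * √t * (a ^ (-(5 / 2) : ℝ) + b ^ (-(5 / 2) : ℝ)) := by
  have hu : 0 < a⁻¹ := inv_pos.mpr ha
  have hv : 0 < b⁻¹ := inv_pos.mpr hb
  have hrecip : |a⁻¹ - b⁻¹| ≤ t * a⁻¹ * b⁻¹ := by
    rw [inv_sub_inv ha.ne' hb.ne', abs_div, abs_sub_comm, abs_of_pos (mul_pos ha hb), div_eq_mul_inv,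
      mul_inv, mul_assoc]
    gcongr
  have hmax : max a⁻¹ b⁻¹ ^ (5 / 2 : ℝ) ≤ a ^ (-(5 / 2) : ℝ) + b ^ (-(5 / 2) : ℝ) := by
    rw [rpow_neg ha.le, rpow_neg hb.le, ← inv_rpow ha.le, ← inv_rpow hb.le]
    rcases max_choice a⁻¹ b⁻¹ with h | h <;> rw [h]
    · exact le_add_of_nonneg_right (by positivity)
    · exact le_add_of_nonneg_left (by positivity)
  have hsqrt : √(max a⁻¹ b⁻¹ ^ 5) = max a⁻¹ b⁻¹ ^ (5 / 2 : ℝ) := by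
    rw [sqrt_eq_rpow, ← rpow_natCast, ← rpow_mul (hu.le.trans (le_max_left _ _))]
    norm_num
  calc |(a ^ 2)⁻¹ - (b ^ 2)⁻¹| = |a⁻¹ ^ 2 - b⁻¹ ^ 2| := by rw [inv_pow, inv_pow]
    _ ≤ √(4 * t * max a⁻¹ b⁻¹ ^ 5) := abs_le_sqrt (sq_sq_sub_sq_le_max_pow hu hv hrecip)
    _ = 2 * √t * max a⁻¹ b⁻¹ ^ (5 / 2 : ℝ) := by
        rw [sqrt_mul' _ (by positivity), sqrt_mul' _ (le_trans (abs_nonneg _) hab), hsqrt,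
          show (4 : ℝ) = 2 ^ 2 by norm_num, sqrt_sq zero_le_two]
    _ ≤ 2 * √t * (a ^ (-(5 / 2) : ℝ) + b ^ (-(5 / 2) : ℝ)) := by gcongr

lemma norm_rpow_neg_le_one_add_indicator {E : Type*} [SeminormedAddCommGroup E] {α : ℝ}
    (hα₀ : 0 ≤ α) (z : E) :
    ‖z‖ ^ (-α) ≤ 1 + (ball 0 1).indicator (fun z : E ↦ ‖z‖ ^ (-α)) z := by
  by_cases hz : z ∈ ball (0 : E) 1
  · simp [hz]
  · rw [Set.indicator_of_notMem hz, add_zero]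
    exact rpow_le_one_of_one_le_of_nonpos (by simpa using hz) (neg_nonpos.mpr hα₀)

section RieszPotential

variable {E : Type*} [NormedAddCommGroup E] [NormedSpace ℝ E] [FiniteDimensional ℝ E]
  [MeasurableSpace E] [BorelSpace E] {μ : Measure E} [μ.IsAddHaarMeasure] {α : ℝ}

lemma integrable_indicator_ball_norm_rpow_neg (hα₀ : 0 ≤ α) (hα : α < finrank ℝ E) :
    Integrable ((ball 0 1).indicator fun z : E ↦ ‖z‖ ^ (-α)) μ := by
  have hd : 1 ≤ finrank ℝ E := by exact_mod_cast hα₀.trans_lt hα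
  refine (integrableOn_ball_of_norm_le_rpow (C := 1) hd hα (ae_of_all _ fun z ↦ ?_)
    (measurable_norm.pow_const _).aestronglyMeasurable).integrable_indicator measurableSet_ball
  rw [norm_of_nonneg (by positivity), one_mul]

lemma integrableOn_norm_sub_rpow_neg (hα₀ : 0 ≤ α) (hα : α < finrank ℝ E) {s : Set E}
    (hs : μ s ≠ ⊤) (c : E) : IntegrableOn (fun η ↦ ‖c - η‖ ^ (-α)) s μ := by
  refine Integrable.mono' ((integrableOn_const (C := (1 : ℝ)) hs).add
    ((integrable_indicator_ball_norm_rpow_neg hα₀ hα).comp_sub_right c).integrableOn)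
    ((measurable_const.sub measurable_id).norm.pow_const _).aestronglyMeasurable
    (ae_of_all _ fun η ↦ ?_)
  rw [norm_of_nonneg (by positivity), norm_sub_rev]
  exact norm_rpow_neg_le_one_add_indicator hα₀ (η - c)

lemma setIntegral_norm_sub_rpow_neg_le (hα₀ : 0 ≤ α) (hα : α < finrank ℝ E) {s : Set E}
    (hs : μ s ≠ ⊤) (c : E) :
    ∫ η in s, ‖c - η‖ ^ (-α) ∂μ ≤ μ.real s + ∫ z in ball 0 1, ‖z‖ ^ (-α) ∂μ := by
  set g := (ball 0 1).indicator fun z : E ↦ ‖z‖ ^ (-α)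
  have hg : Integrable (fun η ↦ g (η - c)) μ :=
    (integrable_indicator_ball_norm_rpow_neg hα₀ hα).comp_sub_right c
  have hg₀ : 0 ≤ g := Set.indicator_nonneg fun z _ ↦ by positivity
  have h1 : IntegrableOn (fun _ ↦ (1 : ℝ)) s μ := integrableOn_const hs
  calc ∫ η in s, ‖c - η‖ ^ (-α) ∂μ ≤ ∫ η in s, (1 + g (η - c)) ∂μ :=
        setIntegral_mono (integrableOn_norm_sub_rpow_neg hα₀ hα hs c) (h1.add hg.integrableOn)
          fun η ↦ norm_sub_rev c η ▸ norm_rpow_neg_le_one_add_indicator hα₀ (η - c)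
    _ = μ.real s + ∫ η in s, g (η - c) ∂μ := by
        rw [integral_add h1 hg.integrableOn, setIntegral_const, smul_eq_mul, mul_one]
    _ ≤ μ.real s + ∫ η, g (η - c) ∂μ :=
        add_le_add_right (setIntegral_le_integral hg (ae_of_all _ fun η ↦ hg₀ (η - c))) _
    _ = μ.real s + ∫ z in ball 0 1, ‖z‖ ^ (-α) ∂μ := by
        rw [integral_sub_right_eq_self g, integral_indicator measurableSet_ball]

theorem setIntegral_abs_inv_norm_sq_sub_inv_norm_sq_le (hd : (5 / 2 : ℝ) < finrank ℝ E)
    {s : Set E} (hs : μ s ≠ ⊤) (x h : E) :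
    ∫ η in s, |(‖x - η‖ ^ 2)⁻¹ - (‖x + h - η‖ ^ 2)⁻¹| ∂μ ≤
      4 * (μ.real s + ∫ z in ball 0 1, ‖z‖ ^ (-(5 / 2) : ℝ) ∂μ) * √‖h‖ := by
  have hα₀ : (0 : ℝ) ≤ 5 / 2 := by norm_num
  have : Nontrivial E := nontrivial_of_finrank_pos (by exact_mod_cast hα₀.trans_lt hd)
  have hint := integrableOn_norm_sub_rpow_neg hα₀ hd hs
  have hbound := setIntegral_norm_sub_rpow_neg_le hα₀ hd hs
  have hpt : ∀ᵐ η ∂μ.restrict s, |(‖x - η‖ ^ 2)⁻¹ - (‖x + h - η‖ ^ 2)⁻¹| ≤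
      2 * √‖h‖ * (‖x - η‖ ^ (-(5 / 2) : ℝ) + ‖x + h - η‖ ^ (-(5 / 2) : ℝ)) := by
    have hnull : ∀ᵐ η ∂μ, η ∉ ({x, x + h} : Set E) :=
      measure_eq_zero_iff_ae_notMem.mp ((Set.toFinite _).measure_zero μ)
    filter_upwards [ae_restrict_of_ae hnull] with η hη
    simp only [Set.mem_insert_iff, Set.mem_singleton_iff, not_or] at hη
    refine abs_inv_sq_sub_inv_sq_le (norm_pos_iff.mpr (sub_ne_zero.mpr (Ne.symm hη.1)))
      (norm_pos_iff.mpr (sub_ne_zero.mpr (Ne.symm hη.2))) ?_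
    calc |‖x - η‖ - ‖x + h - η‖| ≤ ‖(x - η) - (x + h - η)‖ := abs_norm_sub_norm_le _ _
      _ = ‖h‖ := by rw [show (x - η) - (x + h - η) = -h by abel, norm_neg]
  calc ∫ η in s, |(‖x - η‖ ^ 2)⁻¹ - (‖x + h - η‖ ^ 2)⁻¹| ∂μ
      ≤ ∫ η in s, 2 * √‖h‖ * (‖x - η‖ ^ (-(5 / 2) : ℝ) + ‖x + h - η‖ ^ (-(5 / 2) : ℝ)) ∂μ :=
        integral_mono_of_nonneg (ae_of_all _ fun _ ↦ abs_nonneg _)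
          (((hint x).add (hint (x + h))).const_mul _) hpt
    _ = 2 * √‖h‖ * (∫ η in s, ‖x - η‖ ^ (-(5 / 2) : ℝ) ∂μ +
          ∫ η in s, ‖x + h - η‖ ^ (-(5 / 2) : ℝ) ∂μ) := by
        rw [integral_const_mul, integral_add (hint x) (hint (x + h))]
    _ ≤ 2 * √‖h‖ * ((μ.real s + ∫ z in ball 0 1, ‖z‖ ^ (-(5 / 2) : ℝ) ∂μ) +
          (μ.real s + ∫ z in ball 0 1, ‖z‖ ^ (-(5 / 2) : ℝ) ∂μ)) := by
        gcongr
        exacts [hbound x, hbound (x + h)]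
    _ = _ := by ring

end RieszPotential

theorem stmt11_general (Ω : Set E3) (hΩb : Bornology.IsBounded Ω) :
    ∃ C : ℝ, 0 < C ∧ ∀ x h : E3, ‖h‖ ≤ 1 →
      (∫ η in Ω, |(‖x - η‖ ^ 2)⁻¹ - (‖x + h - η‖ ^ 2)⁻¹|)
        ≤ C * Real.sqrt ‖h‖ := by
  set K := volume.real Ω + ∫ z in ball (0 : E3) 1, ‖z‖ ^ (-(5 / 2) : ℝ)
  have hK : 0 ≤ K := add_nonneg measureReal_nonneg
    (setIntegral_nonneg measurableSet_ball fun z _ ↦ by positivity)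
  have hd : (5 / 2 : ℝ) < finrank ℝ E3 := by norm_num [finrank_euclideanSpace_fin]
  refine ⟨4 * K + 1, by positivity, fun x h _ ↦ ?_⟩
  calc (∫ η in Ω, |(‖x - η‖ ^ 2)⁻¹ - (‖x + h - η‖ ^ 2)⁻¹|) ≤ 4 * K * √‖h‖ :=
        setIntegral_abs_inv_norm_sq_sub_inv_norm_sq_le hd hΩb.measure_lt_top.ne x h
    _ ≤ (4 * K + 1) * √‖h‖ := by gcongr; linarith

theorem stmt11 (Ω : Set E3) (hΩm : MeasurableSet Ω) (hΩb : Bornology.IsBounded Ω) :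
    ∃ C : ℝ, 0 < C ∧ ∀ x h : E3, ‖h‖ ≤ 1 →
      (∫ η in Ω, |(‖x - η‖ ^ 2)⁻¹ - (‖x + h - η‖ ^ 2)⁻¹|)
        ≤ C * Real.sqrt ‖h‖ :=
  stmt11_general Ω hΩb
end
end

section
/- Let φ : ℝ³ → ℝ be bounded and Lipschitz continuous. Then there exists a constant C > 0, depending only on sup|φ| and the Lipschitz constant of φ, such that for all z, x, h, η ∈ ℝ³ with η ≠ x and η ≠ x + h: | ∫_0^{|η−x|} φ(z − x − λ·(η−x)/|η−x|) dλ − ∫_0^{|η−x−h|} φ(z − x − h − λ·(η−x−h)/|η−x−h|) dλ | ≤ C |h| (1 + |η−x|). -/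
/-!
Both integrals run along rays, so split the difference into the integral over the common
length `‖η - x‖` of the difference of the integrands, plus the integral of the second integrand
over the extra length between `‖η - x - h‖` and `‖η - x‖`. The second part is at most
`sup |φ| · ‖h‖`. For the first, the two points being compared differ by `h` plus `t` times the
difference of the unit directions, which is at most `2 ‖h‖ / ‖η - x‖`; since `t ≤ ‖η - x‖`,
Lipschitz continuity bounds the integrand by `3 Lip ‖h‖`.
-/

open MeasureTheory Real

noncomputable section

section

variable {E : Type*} [NormedAddCommGroup E] [NormedSpace ℝ E]

lemma norm_inv_norm_smul_sub_inv_norm_smul_le {a : E} (ha : a ≠ 0) (b : E) :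
    ‖‖a‖⁻¹ • a - ‖b‖⁻¹ • b‖ ≤ 2 * ‖a - b‖ / ‖a‖ := by
  rcases eq_or_ne b 0 with rfl | hb
  · simp [norm_smul, ha]
  have hna : 0 < ‖a‖ := norm_pos_iff.mpr ha
  have hnb : ‖b‖ ≠ 0 := norm_ne_zero_iff.mpr hb
  have hsplit : ‖a‖ • (‖a‖⁻¹ • a - ‖b‖⁻¹ • b) = (a - b) + ((‖b‖ - ‖a‖) / ‖b‖) • b := by
    rw [smul_sub, smul_smul, smul_smul, mul_inv_cancel₀ hna.ne', one_smul, sub_div,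
      div_self hnb, sub_smul, one_smul, div_eq_mul_inv]
    abel
  have hrescale : ‖((‖b‖ - ‖a‖) / ‖b‖) • b‖ = |‖b‖ - ‖a‖| := by
    rw [norm_smul, norm_div, norm_norm, Real.norm_eq_abs, div_mul_cancel₀ _ hnb]
  rw [le_div_iff₀ hna, mul_comm]
  calc ‖a‖ * ‖‖a‖⁻¹ • a - ‖b‖⁻¹ • b‖ = ‖(a - b) + ((‖b‖ - ‖a‖) / ‖b‖) • b‖ := by
        rw [← hsplit, norm_smul, norm_norm]
    _ ≤ ‖a - b‖ + |‖b‖ - ‖a‖| := by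
        rw [← hrescale]; exact norm_add_le _ _
    _ ≤ 2 * ‖a - b‖ := by
        have := abs_norm_sub_norm_le b a
        rw [norm_sub_rev] at this
        linarith

lemma abs_integral_lipschitz_ray_sub_le {φ : E → ℝ} {K : NNReal} (hφ : LipschitzWith K φ)
    (p q u v : E) {L : ℝ} (hL : 0 ≤ L) :
    |∫ t in (0:ℝ)..L, (φ (p - t • u) - φ (q - t • v))| ≤ K * (‖p - q‖ + L * ‖u - v‖) * L := by
  have hpoint : ∀ t ∈ Set.uIoc 0 L,
      ‖φ (p - t • u) - φ (q - t • v)‖ ≤ K * (‖p - q‖ + L * ‖u - v‖) := by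
    intro t ht
    rw [Set.uIoc_of_le hL] at ht
    calc ‖φ (p - t • u) - φ (q - t • v)‖ ≤ K * ‖(p - t • u) - (q - t • v)‖ := by
          simpa only [dist_eq_norm] using hφ.dist_le_mul (p - t • u) (q - t • v)
      _ ≤ K * (‖p - q‖ + L * ‖u - v‖) := by
          gcongr
          calc ‖(p - t • u) - (q - t • v)‖ = ‖(p - q) - t • (u - v)‖ := by
                rw [smul_sub]; abel_nf
            _ ≤ ‖p - q‖ + t * ‖u - v‖ := by
                refine (norm_sub_le _ _).trans ?_
                rw [norm_smul, Real.norm_of_nonneg ht.1.le]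
            _ ≤ ‖p - q‖ + L * ‖u - v‖ := by gcongr; exact ht.2
  simpa [abs_of_nonneg hL] using intervalIntegral.norm_integral_le_of_norm_le_const hpoint

lemma abs_integral_ray_sub_integral_ray_le {φ : E → ℝ} {M : ℝ} {K : NNReal}
    (hM : ∀ y, |φ y| ≤ M) (hφ : LipschitzWith K φ) (p q : E) {a : E} (ha : a ≠ 0) (b : E) :
    |(∫ t in (0:ℝ)..‖a‖, φ (p - t • (‖a‖⁻¹ • a))) - ∫ t in (0:ℝ)..‖b‖, φ (q - t • (‖b‖⁻¹ • b))|
      ≤ K * (‖p - q‖ + 2 * ‖a - b‖) * ‖a‖ + M * ‖a - b‖ := by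
  set u := ‖a‖⁻¹ • a
  set v := ‖b‖⁻¹ • b
  have hna : 0 < ‖a‖ := norm_pos_iff.mpr ha
  have hF : Continuous fun t : ℝ ↦ φ (p - t • u) := hφ.continuous.comp (by fun_prop)
  have hG : Continuous fun t : ℝ ↦ φ (q - t • v) := hφ.continuous.comp (by fun_prop)
  have hsplit : (∫ t in (0:ℝ)..‖a‖, φ (p - t • u)) - ∫ t in (0:ℝ)..‖b‖, φ (q - t • v)
      = (∫ t in (0:ℝ)..‖a‖, (φ (p - t • u) - φ (q - t • v))) + ∫ t in ‖b‖..‖a‖, φ (q - t • v) := by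
    rw [intervalIntegral.integral_sub (hF.intervalIntegrable _ _) (hG.intervalIntegrable _ _),
      ← intervalIntegral.integral_interval_sub_left (hG.intervalIntegrable 0 ‖a‖)
        (hG.intervalIntegrable 0 ‖b‖)]
    ring
  have hdir : ‖a‖ * ‖u - v‖ ≤ 2 * ‖a - b‖ := by
    rw [← le_div_iff₀' hna]; exact norm_inv_norm_smul_sub_inv_norm_smul_le ha b
  have htail : |∫ t in ‖b‖..‖a‖, φ (q - t • v)| ≤ M * ‖a - b‖ := by
    calc |∫ t in ‖b‖..‖a‖, φ (q - t • v)| ≤ M * |‖a‖ - ‖b‖| :=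
          intervalIntegral.norm_integral_le_of_norm_le_const (f := fun t ↦ φ (q - t • v))
            fun t _ ↦ hM _
      _ ≤ M * ‖a - b‖ := by
          gcongr
          · exact (abs_nonneg _).trans (hM 0)
          · exact abs_norm_sub_norm_le a b
  rw [hsplit]
  calc _ ≤ |∫ t in (0:ℝ)..‖a‖, (φ (p - t • u) - φ (q - t • v))|
          + |∫ t in ‖b‖..‖a‖, φ (q - t • v)| := abs_add_le _ _
    _ ≤ K * (‖p - q‖ + ‖a‖ * ‖u - v‖) * ‖a‖ + M * ‖a - b‖ :=
        add_le_add (abs_integral_lipschitz_ray_sub_le hφ p q u v hna.le) htail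
    _ ≤ K * (‖p - q‖ + 2 * ‖a - b‖) * ‖a‖ + M * ‖a - b‖ := by gcongr

end

theorem stmt14 (Cb : ℝ) (Lip : NNReal) :
    ∃ C : ℝ, 0 < C ∧ ∀ φ : E3 → ℝ, (∀ y, |φ y| ≤ Cb) → LipschitzWith Lip φ →
      ∀ z x h η : E3, η ≠ x → η ≠ x + h →
        |(∫ t in (0:ℝ)..‖η - x‖, φ (z - x - t • (‖η - x‖⁻¹ • (η - x)))) -
            ∫ t in (0:ℝ)..‖η - x - h‖, φ (z - x - h - t • (‖η - x - h‖⁻¹ • (η - x - h)))|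
          ≤ C * ‖h‖ * (1 + ‖η - x‖) := by
  refine ⟨|Cb| + 3 * Lip + 1, by positivity, fun φ hCb hLip z x h η hx _ ↦ ?_⟩
  have hbound := abs_integral_ray_sub_integral_ray_le hCb hLip (z - x) (z - x - h)
    (sub_ne_zero.mpr hx) (η - x - h)
  rw [sub_sub_cancel, sub_sub_cancel] at hbound
  refine hbound.trans ?_
  have hh := norm_nonneg h
  have ha := norm_nonneg (η - x)
  nlinarith [mul_le_mul_of_nonneg_right (le_abs_self Cb) hh,
    mul_nonneg (mul_nonneg (abs_nonneg Cb) hh) ha, mul_nonneg hh ha, Lip.coe_nonneg]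
end
end

section
/- Let Ω ⊂ ℝ³ be open, bounded and convex with diameter D, let γ_max > 0, let β : ℝ³ → [0, γ_max] be measurable and vanish outside Ω, let φ : ℝ³ → [0,∞) be continuous with compact support, even, and with ∫_{ℝ³} φ = 1, let u : ℝ³ → [0,∞) be bounded measurable and vanish outside Ω, and let G : S² → [0,∞) be σ-integrable. With s(x,n) = sup{t ≥ 0 : x − t·n ∈ Ω}, define for x ∈ Ω: B(x) = ∫_Ω (β ∗ φ)(η) u(η) (4π |x−η|²)^{−1} exp(−∫_0^{|x−η|} (β ∗ φ)(x − t·(x−η)/|x−η|) dt) dη + ∫_{S²} G(n) exp(−∫_0^{s(x,n)} (β ∗ φ)(x − t·n) dt) dσ(n). Then for every x ∈ Ω: 0 ≤ B(x) ≤ (1 − e^{−D γ_max}) · (ess sup u) + ∫_{S²} G dσ. -/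
open MeasureTheory Real

noncomputable section

/-- The convolution `(β ∗ φ)(y) = ∫ β(ξ) φ(y - ξ) dξ`. -/
def convOp (β φ : E3 → ℝ) (y : E3) : ℝ := ∫ ξ, β ξ * φ (y - ξ)

/-- The exit time `s(z, n) = sup {t ≥ 0 : z - t n ∈ Ω}` of the backward ray from `z`
in direction `-n`. -/
def exitTime (Ω : Set E3) (n z : E3) : ℝ := sSup {t : ℝ | 0 ≤ t ∧ z - t • n ∈ Ω}

/-- The operator `B` from the regularized non-local fixed-point equation. -/
def Bop (Ω : Set E3) (β φ u G : E3 → ℝ) (x : E3) : ℝ :=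
  (∫ η in Ω, convOp β φ η * u η * (4 * π * ‖x - η‖ ^ 2)⁻¹ *
      Real.exp (-(∫ t in (0:ℝ)..‖x - η‖, convOp β φ (x - t • (‖x - η‖⁻¹ • (x - η)))))) +
    ∫ n, G n * Real.exp (-(∫ t in (0:ℝ)..exitTime Ω n x, convOp β φ (x - t • n))) ∂sphereμ

/-!
Write `c = β ∗ φ`; it is continuous with `0 ≤ c ≤ γmax`. In the second term of `B` the exponential
factor is at most `1`. For the first term, pass to polar coordinates `η = x - r n` around `x`: the
Jacobian `r²` cancels the factor `(4π r²)⁻¹`, and along each ray the integrand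
`c (x - r n) * exp (-A r)`, with `A r = ∫₀ʳ c (x - t n) dt` the optical depth, is the derivative of
`-exp (-A r)`. As the ray leaves `Ω` before `r = D`, the radial integral is at most
`1 - exp (-A D) ≤ 1 - exp (-D γmax)`, and the sphere has mass `4π`.
-/

open Set Metric Module Filter
open scoped ENNReal

section OpticalDepth

variable {E : Type*} [NormedAddCommGroup E] [NormedSpace ℝ E] {c : E → ℝ}

def opticalDepth (c : E → ℝ) (x v : E) (r : ℝ) : ℝ :=
  ∫ t in (0:ℝ)..r, c (x - t • v)

lemma continuous_opticalDepth (hc : Continuous c) (x : E) :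
    Continuous fun p : E × ℝ => opticalDepth c x p.1 p.2 := by
  have hf : Continuous (Function.uncurry fun (p : E × ℝ) (t : ℝ) => c (x - t • p.1)) := by
    fun_prop
  exact intervalIntegral.continuous_parametric_intervalIntegral_of_continuous hf continuous_snd

lemma hasDerivAt_opticalDepth (hc : Continuous c) (x v : E) (r : ℝ) :
    HasDerivAt (opticalDepth c x v) (c (x - r • v)) r := by
  have hq : Continuous fun t : ℝ => c (x - t • v) := by fun_prop
  exact intervalIntegral.integral_hasDerivAt_right (hq.intervalIntegrable _ _)
    (hq.stronglyMeasurableAtFilter _ _) hq.continuousAt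

lemma opticalDepth_nonneg (hc0 : ∀ y, 0 ≤ c y) (x v : E) {r : ℝ} (hr : 0 ≤ r) :
    0 ≤ opticalDepth c x v r :=
  intervalIntegral.integral_nonneg hr fun _ _ => hc0 _

lemma opticalDepth_le (hc : Continuous c) {γ : ℝ} (hcγ : ∀ y, c y ≤ γ) (x v : E) {r : ℝ}
    (hr : 0 ≤ r) : opticalDepth c x v r ≤ r * γ := by
  have hq : Continuous fun t : ℝ => c (x - t • v) := by fun_prop
  simpa [opticalDepth] using intervalIntegral.integral_mono_on hr (hq.intervalIntegrable _ _)
    (intervalIntegrable_const (μ := volume)) fun t _ => hcγ (x - t • v)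

lemma integral_mul_exp_neg_opticalDepth (hc : Continuous c) (x v : E) (b : ℝ) :
    ∫ r in (0:ℝ)..b, c (x - r • v) * exp (-opticalDepth c x v r) =
      1 - exp (-opticalDepth c x v b) := by
  have hA := hasDerivAt_opticalDepth hc x v
  have hAc : Continuous (opticalDepth c x v) :=
    continuous_iff_continuousAt.2 fun r => (hA r).continuousAt
  have hderiv : ∀ r, HasDerivAt (fun s => -exp (-opticalDepth c x v s))
      (c (x - r • v) * exp (-opticalDepth c x v r)) r := fun r => by
    have h : HasDerivAt (fun s => -exp (-opticalDepth c x v s))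
        (-(exp (-opticalDepth c x v r) * -c (x - r • v))) r := (hA r).neg.exp.neg
    convert h using 1
    ring
  have hintegrand : Continuous fun r => c (x - r • v) * exp (-opticalDepth c x v r) := by fun_prop
  have hA0 : opticalDepth c x v 0 = 0 := intervalIntegral.integral_same
  rw [intervalIntegral.integral_eq_sub_of_hasDerivAt (fun r _ => hderiv r)
    (hintegrand.intervalIntegrable _ _), hA0, neg_zero, exp_zero]
  ring

lemma integral_mul_exp_neg_opticalDepth_le (hc : Continuous c) {γ : ℝ} (hcγ : ∀ y, c y ≤ γ)
    (x v : E) {b : ℝ} (hb : 0 ≤ b) :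
    ∫ r in (0:ℝ)..b, c (x - r • v) * exp (-opticalDepth c x v r) ≤ 1 - exp (-(b * γ)) := by
  rw [integral_mul_exp_neg_opticalDepth hc]
  gcongr
  exact opticalDepth_le hc hcγ x v hb

end OpticalDepth

section Polar

lemma lintegral_volumeIoiPow (n : ℕ) (g : ℝ → ℝ≥0∞) :
    ∫⁻ r, g r ∂Measure.volumeIoiPow n = ∫⁻ r in Ioi (0:ℝ), ENNReal.ofReal (r ^ n) * g r := by
  rw [Measure.volumeIoiPow, lintegral_withDensity_eq_lintegral_mul_non_measurable _
    (by fun_prop) (ae_of_all _ fun _ => ENNReal.ofReal_lt_top)]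
  exact lintegral_subtype_comap measurableSet_Ioi fun r => ENNReal.ofReal (r ^ n) * g r

variable {E : Type*} [NormedAddCommGroup E] [InnerProductSpace ℝ E] [FiniteDimensional ℝ E]
  [MeasurableSpace E] [BorelSpace E] [Nontrivial E]

lemma lintegral_eq_lintegral_toSphere_lintegral_Ioi (μ : Measure E) [μ.IsAddHaarMeasure]
    {f : E → ℝ≥0∞} (hf : Measurable f) (x : E) :
    ∫⁻ y, f y ∂μ = ∫⁻ n, (∫⁻ r in Ioi (0:ℝ),
      ENNReal.ofReal (r ^ (finrank ℝ E - 1)) * f (x - r • (n : E))) ∂μ.toSphere := by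
  have hg : Measurable fun p : sphere (0:E) 1 × Ioi (0:ℝ) => f (x - p.2.1 • (p.1 : E)) := by
    fun_prop
  calc ∫⁻ y, f y ∂μ = ∫⁻ y, f (x - y) ∂μ :=
        ((μ.measurePreserving_sub_left x).lintegral_comp_emb
          (MeasurableEquiv.subLeft x).measurableEmbedding f).symm
    _ = ∫⁻ y : ({0}ᶜ : Set E), f (x - y) ∂μ.comap (↑) := by
        rw [lintegral_subtype_comap (measurableSet_singleton 0).compl fun y => f (x - y),
          restrict_compl_singleton]
    _ = ∫⁻ p, f (x - p.2.1 • (p.1 : E)) ∂μ.toSphere.prod (Measure.volumeIoiPow _) := by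
        rw [← μ.measurePreserving_homeomorphUnitSphereProd.lintegral_comp_emb
          (Homeomorph.measurableEmbedding _)]
        refine lintegral_congr fun y => ?_
        simp [smul_inv_smul₀ (norm_ne_zero_iff.2 y.2)]
    _ = _ := by
        rw [lintegral_prod _ hg.aemeasurable]
        exact lintegral_congr fun n => lintegral_volumeIoiPow _ fun r => f (x - r • (n : E))

end Polar

lemma toSphere_univ_euclideanSpace_fin_three :
    (volume : Measure E3).toSphere univ = ENNReal.ofReal (4 * π) := by
  rw [Measure.toSphere_apply_univ, finrank_euclideanSpace_fin,
    EuclideanSpace.volume_ball_fin_three]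
  simp only [ENNReal.ofReal_one, one_pow, one_mul, Nat.cast_ofNat]
  rw [← ENNReal.ofReal_ofNat 3, ← ENNReal.ofReal_mul (by norm_num)]
  ring_nf

lemma integral_mul_le_of_ae_le {α : Type*} [MeasurableSpace α] {μ : Measure α} {k u : α → ℝ}
    {M : ℝ} (hk : Integrable k μ) (hk0 : ∀ a, 0 ≤ k a) (hu0 : ∀ a, 0 ≤ u a)
    (huM : ∀ᵐ a ∂μ, u a ≤ M) : ∫ a, u a * k a ∂μ ≤ M * ∫ a, k a ∂μ := by
  rw [← integral_const_mul]
  exact integral_mono_of_nonneg (ae_of_all _ fun a => mul_nonneg (hu0 a) (hk0 a))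
    (hk.const_mul M) (huM.mono fun a ha => mul_le_mul_of_nonneg_right ha (hk0 a))

section AttenuationKernel

variable {c : E3 → ℝ}

def attenuationKernel (c : E3 → ℝ) (x η : E3) : ℝ :=
  c η * (4 * π * ‖x - η‖ ^ 2)⁻¹ * exp (-opticalDepth c x (‖x - η‖⁻¹ • (x - η)) ‖x - η‖)

lemma attenuationKernel_nonneg (hc0 : ∀ y, 0 ≤ c y) (x η : E3) : 0 ≤ attenuationKernel c x η := by
  unfold attenuationKernel
  have := hc0 η
  positivity

lemma measurable_attenuationKernel (hc : Continuous c) (x : E3) :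
    Measurable (attenuationKernel c x) := by
  have hpolar : Measurable fun η : E3 => (‖x - η‖⁻¹ • (x - η), ‖x - η‖) := by fun_prop
  have hτ : Measurable fun η : E3 => opticalDepth c x (‖x - η‖⁻¹ • (x - η)) ‖x - η‖ :=
    (continuous_opticalDepth hc x).measurable.comp hpolar
  unfold attenuationKernel
  fun_prop

lemma sq_mul_attenuationKernel_sub_smul (c : E3 → ℝ) (x : E3) {n : E3} (hn : ‖n‖ = 1) {r : ℝ}
    (hr : 0 < r) :
    r ^ 2 * attenuationKernel c x (x - r • n) =
      (4 * π)⁻¹ * (c (x - r • n) * exp (-opticalDepth c x n r)) := by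
  have hnorm : ‖x - (x - r • n)‖ = r := by rw [sub_sub_cancel, norm_smul, hn, mul_one,
    Real.norm_of_nonneg hr.le]
  have hdir : ‖x - (x - r • n)‖⁻¹ • (x - (x - r • n)) = n := by
    rw [hnorm, sub_sub_cancel, smul_smul, inv_mul_cancel₀ hr.ne', one_smul]
  rw [attenuationKernel, hdir, hnorm]
  field_simp

variable {γ : ℝ} {Ω : Set E3} {x : E3} {D : ℝ}

lemma lintegral_Ioi_sq_mul_indicator_attenuationKernel_le (hc : Continuous c)
    (hc0 : ∀ y, 0 ≤ c y) (hcγ : ∀ y, c y ≤ γ) (hD : 0 ≤ D) (hΩ : Ω ⊆ closedBall x D) {n : E3}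
    (hn : ‖n‖ = 1) :
    ∫⁻ r in Ioi (0:ℝ), ENNReal.ofReal (r ^ 2) *
        Ω.indicator (fun η => ENNReal.ofReal (attenuationKernel c x η)) (x - r • n) ≤
      ENNReal.ofReal ((4 * π)⁻¹ * (1 - exp (-(D * γ)))) := by
  set w : ℝ → ℝ := fun r => (4 * π)⁻¹ * (c (x - r • n) * exp (-opticalDepth c x n r))
  have hw : Continuous w := by
    have hAc : Continuous (opticalDepth c x n) :=
      continuous_iff_continuousAt.2 fun r => (hasDerivAt_opticalDepth hc x n r).continuousAt
    fun_prop
  have hpt : ∀ r ∈ Ioi (0:ℝ), ENNReal.ofReal (r ^ 2) *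
      Ω.indicator (fun η => ENNReal.ofReal (attenuationKernel c x η)) (x - r • n) ≤
      (Ioc 0 D).indicator (fun r => ENNReal.ofReal (w r)) r := by
    intro r (hr : 0 < r)
    by_cases hmem : x - r • n ∈ Ω
    · have hrD : r ≤ D := by
        simpa [dist_eq_norm, norm_smul, hn, abs_of_pos hr] using hΩ hmem
      rw [indicator_of_mem hmem, indicator_of_mem (show r ∈ Ioc 0 D from ⟨hr, hrD⟩),
        ← ENNReal.ofReal_mul (by positivity), sq_mul_attenuationKernel_sub_smul c x hn hr]
    · simp [indicator_of_notMem hmem]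
  calc _ ≤ ∫⁻ r in Ioi (0:ℝ), (Ioc 0 D).indicator (fun r => ENNReal.ofReal (w r)) r :=
        setLIntegral_mono' measurableSet_Ioi hpt
    _ ≤ ∫⁻ r, (Ioc 0 D).indicator (fun r => ENNReal.ofReal (w r)) r := setLIntegral_le_lintegral _ _
    _ = ENNReal.ofReal (∫ r in (0:ℝ)..D, w r) := by
        rw [lintegral_indicator measurableSet_Ioc, intervalIntegral.integral_of_le hD,
          ofReal_integral_eq_lintegral_ofReal hw.integrableOn_Ioc
            (ae_of_all _ fun r => by have := hc0 (x - r • n); positivity)]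
    _ ≤ _ := by
        gcongr
        rw [intervalIntegral.integral_const_mul]
        gcongr
        exact integral_mul_exp_neg_opticalDepth_le hc hcγ x n hD

lemma lintegral_attenuationKernel_le (hc : Continuous c) (hc0 : ∀ y, 0 ≤ c y)
    (hcγ : ∀ y, c y ≤ γ) (hΩm : MeasurableSet Ω) (hD : 0 ≤ D) (hΩ : Ω ⊆ closedBall x D) :
    ∫⁻ η in Ω, ENNReal.ofReal (attenuationKernel c x η) ≤ ENNReal.ofReal (1 - exp (-(D * γ))) := by
  have hF : Measurable (Ω.indicator fun η => ENNReal.ofReal (attenuationKernel c x η)) :=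
    (measurable_attenuationKernel hc x).ennreal_ofReal.indicator hΩm
  rw [← lintegral_indicator hΩm, lintegral_eq_lintegral_toSphere_lintegral_Ioi volume hF x,
    finrank_euclideanSpace_fin]
  calc _ ≤ ∫⁻ _ : sphere (0 : E3) 1, ENNReal.ofReal ((4 * π)⁻¹ * (1 - exp (-(D * γ))))
          ∂(volume : Measure E3).toSphere :=
        lintegral_mono fun n => lintegral_Ioi_sq_mul_indicator_attenuationKernel_le hc hc0 hcγ hD hΩ
          (mem_sphere_zero_iff_norm.1 n.2)
    _ = _ := by
        rw [lintegral_const, toSphere_univ_euclideanSpace_fin_three,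
          ← ENNReal.ofReal_mul' (by positivity)]
        field_simp

lemma integrableOn_attenuationKernel (hc : Continuous c) (hc0 : ∀ y, 0 ≤ c y)
    (hcγ : ∀ y, c y ≤ γ) (hΩm : MeasurableSet Ω) (hD : 0 ≤ D) (hΩ : Ω ⊆ closedBall x D) :
    IntegrableOn (attenuationKernel c x) Ω :=
  ⟨(measurable_attenuationKernel hc x).aestronglyMeasurable,
    (hasFiniteIntegral_iff_ofReal (ae_of_all _ (attenuationKernel_nonneg hc0 x))).2
      ((lintegral_attenuationKernel_le hc hc0 hcγ hΩm hD hΩ).trans_lt ENNReal.ofReal_lt_top)⟩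

lemma setIntegral_attenuationKernel_le (hc : Continuous c) (hc0 : ∀ y, 0 ≤ c y)
    (hcγ : ∀ y, c y ≤ γ) (hΩm : MeasurableSet Ω) (hD : 0 ≤ D) (hΩ : Ω ⊆ closedBall x D) :
    ∫ η in Ω, attenuationKernel c x η ≤ 1 - exp (-(D * γ)) := by
  have hγ : 0 ≤ γ := (hc0 0).trans (hcγ 0)
  rw [integral_eq_lintegral_of_nonneg_ae (ae_of_all _ (attenuationKernel_nonneg hc0 x))
    (measurable_attenuationKernel hc x).aestronglyMeasurable]
  refine ENNReal.toReal_le_of_le_ofReal ?_ (lintegral_attenuationKernel_le hc hc0 hcγ hΩm hD hΩ)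
  simpa using mul_nonneg hD hγ

lemma setIntegral_mul_attenuationKernel_le (hc : Continuous c) (hc0 : ∀ y, 0 ≤ c y)
    (hcγ : ∀ y, c y ≤ γ) (hΩm : MeasurableSet Ω) (hD : 0 ≤ D) (hΩ : Ω ⊆ closedBall x D)
    {u : E3 → ℝ} {M : ℝ} (hu0 : ∀ y, 0 ≤ u y) (huM : ∀ᵐ y, u y ≤ M) (hM0 : 0 ≤ M) :
    ∫ η in Ω, u η * attenuationKernel c x η ≤ (1 - exp (-(D * γ))) * M :=
  calc _ ≤ M * ∫ η in Ω, attenuationKernel c x η :=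
        integral_mul_le_of_ae_le (integrableOn_attenuationKernel hc hc0 hcγ hΩm hD hΩ)
          (attenuationKernel_nonneg hc0 x) hu0 (ae_restrict_of_ae huM)
    _ ≤ M * (1 - exp (-(D * γ))) := by
        gcongr
        exact setIntegral_attenuationKernel_le hc hc0 hcγ hΩm hD hΩ
    _ = _ := mul_comm _ _

end AttenuationKernel

section Convolution

variable {β φ : E3 → ℝ}

lemma convOp_nonneg (hβ0 : ∀ y, 0 ≤ β y) (hφ0 : ∀ y, 0 ≤ φ y) (y : E3) : 0 ≤ convOp β φ y :=
  integral_nonneg fun ξ => mul_nonneg (hβ0 ξ) (hφ0 _)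

lemma convOp_le {γ : ℝ} (hβm : AEStronglyMeasurable β) (hβ0 : ∀ y, 0 ≤ β y)
    (hβγ : ∀ y, β y ≤ γ) (hφi : Integrable φ) (hφ0 : ∀ y, 0 ≤ φ y) (hφ1 : ∫ y, φ y = 1)
    (y : E3) : convOp β φ y ≤ γ := by
  have hφy : Integrable fun ξ => φ (y - ξ) := hφi.comp_sub_left y
  have hβφ : Integrable fun ξ => β ξ * φ (y - ξ) :=
    (hφy.const_mul γ).mono' (hβm.mul hφy.aestronglyMeasurable) (ae_of_all _ fun ξ => by
      rw [Real.norm_of_nonneg (mul_nonneg (hβ0 ξ) (hφ0 _))]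
      exact mul_le_mul_of_nonneg_right (hβγ ξ) (hφ0 _))
  calc convOp β φ y ≤ ∫ ξ, γ * φ (y - ξ) :=
        integral_mono hβφ (hφy.const_mul γ) fun ξ => mul_le_mul_of_nonneg_right (hβγ ξ) (hφ0 _)
    _ = γ := by rw [integral_const_mul, integral_sub_left_eq_self φ volume y, hφ1, mul_one]

open Convolution in
lemma continuous_convOp (hβ : LocallyIntegrable β) (hφc : Continuous φ)
    (hφs : HasCompactSupport φ) : Continuous (convOp β φ) := by
  have h : convOp β φ = β ⋆[ContinuousLinearMap.mul ℝ ℝ] φ := by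
    ext y
    simp [convOp, convolution_def]
  rw [h]
  exact hφs.continuous_convolution_right _ hβ hφc

end Convolution

lemma integral_mul_exp_neg_le_integral {α : Type*} [MeasurableSpace α] {μ : Measure α}
    {G h : α → ℝ} (hG0 : ∀ a, 0 ≤ G a) (hGi : Integrable G μ) (hh : ∀ a, 0 ≤ h a) :
    ∫ a, G a * exp (-h a) ∂μ ≤ ∫ a, G a ∂μ :=
  integral_mono_of_nonneg (ae_of_all _ fun a => mul_nonneg (hG0 a) (exp_nonneg _)) hGi
    (ae_of_all _ fun a => mul_le_of_le_one_right (hG0 a) (exp_le_one_iff.2 (neg_nonpos.2 (hh a))))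

lemma exitTime_nonneg {Ω : Set E3} {x : E3} (hx : x ∈ Ω) (n : E3) : 0 ≤ exitTime Ω n x :=
  Real.sSup_nonneg' ⟨0, ⟨le_rfl, by simpa using hx⟩, le_rfl⟩

lemma Bop_eq_setIntegral_add_integral (Ω : Set E3) (β φ u G : E3 → ℝ) (x : E3) :
    Bop Ω β φ u G x = (∫ η in Ω, u η * attenuationKernel (convOp β φ) x η) +
      ∫ n, G n * exp (-opticalDepth (convOp β φ) x n (exitTime Ω n x)) ∂sphereμ := by
  unfold Bop
  congr 1
  refine integral_congr_ae (ae_of_all _ fun η => ?_)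
  simp only [attenuationKernel, opticalDepth]
  ring

theorem stmt17_general (Ω : Set E3) (hΩo : IsOpen Ω) (hΩb : Bornology.IsBounded Ω)
    (γmax : ℝ)
    (β : E3 → ℝ) (hβm : Measurable β) (hβ : ∀ y, 0 ≤ β y ∧ β y ≤ γmax)
    (φ : E3 → ℝ) (hφc : Continuous φ) (hφs : HasCompactSupport φ)
    (hφ0 : ∀ y, 0 ≤ φ y) (hφ1 : (∫ y, φ y) = 1)
    (u : E3 → ℝ) (hu0 : ∀ y, 0 ≤ u y)
    (hub : ∃ Cu : ℝ, ∀ y, u y ≤ Cu)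
    (G : E3 → ℝ) (hG0 : ∀ n : E3, 0 ≤ G n) (hGi : Integrable G sphereμ)
    (x : E3) (hx : x ∈ Ω) :
    0 ≤ Bop Ω β φ u G x ∧
      Bop Ω β φ u G x ≤
        (1 - Real.exp (-(Metric.diam Ω * γmax))) * essSup u volume +
          ∫ n, G n ∂sphereμ := by
  set c := convOp β φ
  have hβloc : LocallyIntegrable β :=
    (locallyIntegrable_const γmax).mono hβm.aestronglyMeasurable (ae_of_all _ fun y => by
      rw [Real.norm_of_nonneg (hβ y).1, Real.norm_of_nonneg ((hβ y).1.trans (hβ y).2)]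
      exact (hβ y).2)
  have hc : Continuous c := continuous_convOp hβloc hφc hφs
  have hc0 : ∀ y, 0 ≤ c y := convOp_nonneg (fun y => (hβ y).1) hφ0
  have hcγ : ∀ y, c y ≤ γmax := convOp_le hβm.aestronglyMeasurable (fun y => (hβ y).1)
    (fun y => (hβ y).2) (hφc.integrable_of_hasCompactSupport hφs) hφ0 hφ1
  have hΩ : Ω ⊆ closedBall x (diam Ω) := fun y hy => dist_le_diam_of_mem hΩb hy hx
  obtain ⟨Cu, hCu⟩ := hub
  have huM : ∀ᵐ y ∂volume, u y ≤ essSup u volume := ae_le_essSup (isBoundedUnder_of ⟨Cu, hCu⟩)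
  have hM0 : 0 ≤ essSup u volume := let ⟨y, hy⟩ := huM.exists; (hu0 y).trans hy
  rw [Bop_eq_setIntegral_add_integral]
  refine ⟨add_nonneg (setIntegral_nonneg hΩo.measurableSet fun η _ => ?_)
    (integral_nonneg fun n => ?_), add_le_add ?_ ?_⟩
  · exact mul_nonneg (hu0 η) (attenuationKernel_nonneg hc0 x η)
  · exact mul_nonneg (hG0 n) (exp_nonneg _)
  · exact setIntegral_mul_attenuationKernel_le hc hc0 hcγ hΩo.measurableSet diam_nonneg hΩ hu0
      huM hM0
  · exact integral_mul_exp_neg_le_integral hG0 hGi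
      fun n => opticalDepth_nonneg hc0 x n (exitTime_nonneg hx n)

theorem stmt17 (Ω : Set E3) (hΩo : IsOpen Ω) (hΩb : Bornology.IsBounded Ω)
    (hΩc : Convex ℝ Ω) (γmax : ℝ) (hγ : 0 < γmax)
    (β : E3 → ℝ) (hβm : Measurable β) (hβ : ∀ y, 0 ≤ β y ∧ β y ≤ γmax)
    (hβ0 : ∀ y, y ∉ Ω → β y = 0)
    (φ : E3 → ℝ) (hφc : Continuous φ) (hφs : HasCompactSupport φ)
    (hφe : ∀ y, φ (-y) = φ y) (hφ0 : ∀ y, 0 ≤ φ y) (hφ1 : (∫ y, φ y) = 1)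
    (u : E3 → ℝ) (hum : Measurable u) (hu0 : ∀ y, 0 ≤ u y)
    (hub : ∃ Cu : ℝ, ∀ y, u y ≤ Cu) (huΩ : ∀ y, y ∉ Ω → u y = 0)
    (G : E3 → ℝ) (hG0 : ∀ n : E3, 0 ≤ G n) (hGi : Integrable G sphereμ)
    (x : E3) (hx : x ∈ Ω) :
    0 ≤ Bop Ω β φ u G x ∧
      Bop Ω β φ u G x ≤
        (1 - Real.exp (-(Metric.diam Ω * γmax))) * essSup u volume +
          ∫ n, G n ∂sphereμ :=
  stmt17_general Ω hΩo hΩb γmax β hβm hβ φ hφc hφs hφ0 hφ1 u hu0 hub G hG0 hGi x hx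
end
end

section
/- For all positive real numbers h, c, k and T: ∫_0^∞ (2 h ν³ / c²) · (e^{hν/(kT)} − 1)^{−1} dν = σ T⁴, where σ = 2π⁴k⁴/(15 h³ c²). Equivalently, ∫_0^∞ x³/(e^x − 1) dx = π⁴/15. -/
/-!
Expanding `1 / (eˣ - 1) = ∑ₙ e^{-(n+1)x}` and integrating termwise against `x^{s-1}` shows that
the Mellin transform of `1 / (eˣ - 1)` is `Γ(s) ζ(s)`; at `s = 4` this is `6 · π⁴/90 = π⁴/15`.
The substitution `x = hν/(kT)` reduces the Planck integral to this one.
-/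

open MeasureTheory Real Set Complex

lemma hasSum_exp_neg_nat_add_one_mul {t : ℝ} (ht : 0 < t) :
    HasSum (fun n : ℕ => rexp (-(n + 1) * t)) (rexp t - 1)⁻¹ := by
  have hq : rexp (-t) < 1 := Real.exp_lt_one_iff.mpr (neg_neg_of_pos ht)
  have hgeom := (hasSum_geometric_of_lt_one (Real.exp_pos _).le hq).mul_left (rexp (-t))
  have hsum : rexp (-t) * (1 - rexp (-t))⁻¹ = (rexp t - 1)⁻¹ := by
    have : 1 < rexp t := Real.one_lt_exp_iff.mpr ht
    rw [Real.exp_neg]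
    field_simp
  rw [hsum] at hgeom
  refine hgeom.congr_fun fun n => ?_
  rw [← Real.exp_nat_mul, ← Real.exp_add]
  ring_nf

theorem mellin_inv_exp_sub_one {s : ℂ} (hs : 1 < s.re) :
    mellin (fun t : ℝ => (((rexp t - 1)⁻¹ : ℝ) : ℂ)) s = Gamma s * riemannZeta s := by
  have hmellin := hasSum_mellin (a := fun _ : ℕ => (1 : ℂ)) (p := fun n => (n : ℝ) + 1)
    (F := fun t => (((rexp t - 1)⁻¹ : ℝ) : ℂ)) (s := s) (fun _ => Or.inr (by positivity))
    (by linarith)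
    (fun t ht => by
      simpa only [one_mul] using hasSum_ofReal.mpr (hasSum_exp_neg_nat_add_one_mul ht))
    (by simpa [abs_of_pos, Nat.cast_add_one_pos] using
      (Real.summable_one_div_nat_add_rpow 1 s.re).mpr hs)
  rw [hmellin.tsum_eq.symm, zeta_eq_tsum_one_div_nat_add_one_cpow hs, ← tsum_mul_left]
  simp [div_eq_mul_inv]

theorem integral_pow_div_exp_sub_one {n : ℕ} (hn : 1 ≤ n) :
    ((∫ x in Ioi (0 : ℝ), x ^ n / (rexp x - 1) : ℝ) : ℂ)
      = n.factorial * riemannZeta (n + 1) := by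
  have hs : 1 < ((n : ℂ) + 1).re := by simp; omega
  rw [← Complex.Gamma_nat_eq_factorial, ← mellin_inv_exp_sub_one hs, mellin,
    ← integral_complex_ofReal]
  refine setIntegral_congr_fun measurableSet_Ioi fun x _ => ?_
  simp [div_eq_mul_inv, ← cpow_natCast]

theorem integral_pow_three_div_exp_sub_one :
    ∫ x in Ioi (0 : ℝ), x ^ 3 / (rexp x - 1) = π ^ 4 / 15 := by
  have h := integral_pow_div_exp_sub_one (n := 3) (by norm_num)
  norm_num [Nat.factorial, riemannZeta_four] at h
  have hπ : ((π ^ 4 / 15 : ℝ) : ℂ) = 6 * (π ^ 4 / 90) := by push_cast; ring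
  exact_mod_cast h.trans hπ.symm

theorem integral_pow_mul_inv_exp_mul_sub_one (n : ℕ) {a : ℝ} (ha : 0 < a) :
    ∫ ν in Ioi (0 : ℝ), ν ^ n * (rexp (a * ν) - 1)⁻¹
      = (∫ x in Ioi (0 : ℝ), x ^ n / (rexp x - 1)) / a ^ (n + 1) := by
  have hscale := integral_comp_mul_left_Ioi (fun x => x ^ n / (rexp x - 1)) 0 ha
  rw [mul_zero, smul_eq_mul] at hscale
  calc ∫ ν in Ioi (0 : ℝ), ν ^ n * (rexp (a * ν) - 1)⁻¹
      = ∫ ν in Ioi (0 : ℝ), (a ^ n)⁻¹ * ((a * ν) ^ n / (rexp (a * ν) - 1)) :=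
        setIntegral_congr_fun measurableSet_Ioi fun ν _ => by field_simp; ring
    _ = _ := by rw [integral_const_mul, hscale]; field_simp; ring

theorem stmt19_general (hP c k T : ℝ) (h1 : 0 < hP) (h3 : 0 < k) (h4 : 0 < T) :
    (∫ ν in Set.Ioi (0:ℝ),
        (2 * hP * ν ^ 3 / c ^ 2) * (Real.exp (hP * ν / (k * T)) - 1)⁻¹)
      = (2 * π ^ 4 * k ^ 4 / (15 * hP ^ 3 * c ^ 2)) * T ^ 4 ∧
    (∫ x in Set.Ioi (0:ℝ), x ^ 3 / (Real.exp x - 1)) = π ^ 4 / 15 := by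
  refine ⟨?_, integral_pow_three_div_exp_sub_one⟩
  have ha : 0 < hP / (k * T) := by positivity
  calc ∫ ν in Ioi (0 : ℝ), (2 * hP * ν ^ 3 / c ^ 2) * (rexp (hP * ν / (k * T)) - 1)⁻¹
      = 2 * hP / c ^ 2 * ∫ ν in Ioi (0 : ℝ), ν ^ 3 * (rexp (hP / (k * T) * ν) - 1)⁻¹ := by
        rw [← integral_const_mul]
        refine setIntegral_congr_fun measurableSet_Ioi fun ν _ => ?_
        ring_nf
    _ = _ := by
        rw [integral_pow_mul_inv_exp_mul_sub_one 3 ha, integral_pow_three_div_exp_sub_one, div_pow]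
        field_simp
        ring

/-- The Stefan–Boltzmann law: the Planck black-body emission integrates to `σ T⁴`
with `σ = 2π⁴k⁴/(15 h³ c²)`; equivalently, `∫_0^∞ x³/(eˣ - 1) dx = π⁴/15`. -/
theorem stmt19 (hP c k T : ℝ) (h1 : 0 < hP) (h2 : 0 < c) (h3 : 0 < k) (h4 : 0 < T) :
    (∫ ν in Set.Ioi (0:ℝ),
        (2 * hP * ν ^ 3 / c ^ 2) * (Real.exp (hP * ν / (k * T)) - 1)⁻¹)
      = (2 * π ^ 4 * k ^ 4 / (15 * hP ^ 3 * c ^ 2)) * T ^ 4 ∧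
    (∫ x in Set.Ioi (0:ℝ), x ^ 3 / (Real.exp x - 1)) = π ^ 4 / 15 :=
  stmt19_general hP c k T h1 h3 h4
end
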